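/- (Lemma 2.4, normal frame) Let a ∈ ℂ and θ ∈ ℝ with 1 − 2|a|²cos θ + |a|⁴ ≠ 0 (equivalently |1 − |a|²e^{−iθ}| ≠ 0), and set D = 4(1 − 2|a|²cos θ + |a|⁴). Define τ(θ;a) = (L₃(a) + L₀(e^{iθ}a))/√D and ν(θ;a) = (L₃(a) − L₀(e^{iθ}a))/√D. Then ⟨τ,τ⟩ = −1, ⟨ν,ν⟩ = 1, ⟨τ,ν⟩ = 0, the last coordinate of τ is 0 (τ³ = 0), the first coordinate of ν is 0 (ν⁰ = 0), and τ, ν are Minkowski-orthogonal to the tangent plane of the θ-family: ⟨τ, W(a, e^{iθ}a)⟩ = 0 and ⟨ν, W(a, e^{iθ}a)⟩ = 0 for the complex-bilinear extension of the Minkowski product to ℂ⁴. -/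

import Mathlib

open Complex ComplexConjugate

/-- The Weierstrass vector `W(a,b) = (a+b, 1+ab, i(1-ab), a-b) ∈ ℂ⁴`. -/
noncomputable def W (a b : ℂ) : Fin 4 → ℂ := ![a + b, 1 + a * b, I * (1 - a * b), a - b]

/-- The complex-bilinear Lorentz form on ℂ⁴ (restricting to the Minkowski product on
real vectors). -/
noncomputable def lprod (z y : Fin 4 → ℂ) : ℂ :=
  -(z 0 * y 0) + z 1 * y 1 + z 2 * y 2 + z 3 * y 3

/-- `L₃(a) = (1+|a|², a+conj a, −i(a−conj a), −1+|a|²)` (a real vector). -/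
noncomputable def L3 (a : ℂ) : Fin 4 → ℂ :=
  ![1 + (‖a‖ : ℂ) ^ 2, a + conj a, -I * (a - conj a), -1 + (‖a‖ : ℂ) ^ 2]

/-- `L₀(e^{iθ}a) = (1+|a|², ae^{iθ}+conj a·e^{−iθ}, −i(ae^{iθ}−conj a·e^{−iθ}), 1−|a|²)`
(a real vector). -/
noncomputable def L0 (θ : ℝ) (a : ℂ) : Fin 4 → ℂ :=
  ![1 + (‖a‖ : ℂ) ^ 2,
    a * Complex.exp (θ * I) + conj a * Complex.exp (-(θ : ℂ) * I),
    -I * (a * Complex.exp (θ * I) - conj a * Complex.exp (-(θ : ℂ) * I)),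
    1 - (‖a‖ : ℂ) ^ 2]

/-!
`L3 a` and `L0 θ a` are null vectors, `L3 a` is orthogonal to `W a b` for every `b`, and
`L0 θ a` to `W c (e^{iθ} a)` for every `c`; moreover `⟨L3 a, L0 θ a⟩ = -D/2`. For null
vectors `u, v` with `⟨u, v⟩ = -s²/2`, the vectors `(u + v)/s` and `(u - v)/s` are a unit
timelike and a unit spacelike vector orthogonal to each other.
-/

section LorentzForm

variable (z y w : Fin 4 → ℂ) (c : ℂ)

theorem lprod_comm : lprod z y = lprod y z := by
  simp only [lprod]; ring

theorem lprod_add_left : lprod (z + y) w = lprod z w + lprod y w := by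
  simp only [lprod, Pi.add_apply]; ring

theorem lprod_add_right : lprod z (y + w) = lprod z y + lprod z w := by
  simp only [lprod, Pi.add_apply]; ring

theorem lprod_sub_left : lprod (z - y) w = lprod z w - lprod y w := by
  simp only [lprod, Pi.sub_apply]; ring

theorem lprod_sub_right : lprod z (y - w) = lprod z y - lprod z w := by
  simp only [lprod, Pi.sub_apply]; ring

theorem lprod_smul_left : lprod (c • z) y = c * lprod z y := by
  simp only [lprod, Pi.smul_apply, smul_eq_mul]; ring

theorem lprod_smul_right : lprod z (c • y) = c * lprod z y := by
  simp only [lprod, Pi.smul_apply, smul_eq_mul]; ring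

end LorentzForm

theorem lprod_frame_of_null_pair {u v : Fin 4 → ℂ} {s : ℂ} (hs : s ≠ 0)
    (hu : lprod u u = 0) (hv : lprod v v = 0) (huv : lprod u v = -s ^ 2 / 2) :
    lprod (s⁻¹ • (u + v)) (s⁻¹ • (u + v)) = -1 ∧
    lprod (s⁻¹ • (u - v)) (s⁻¹ • (u - v)) = 1 ∧
    lprod (s⁻¹ • (u + v)) (s⁻¹ • (u - v)) = 0 := by
  simp only [lprod_smul_left, lprod_smul_right, lprod_add_left, lprod_add_right,
    lprod_sub_left, lprod_sub_right, lprod_comm v u, hu, hv, huv]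
  refine ⟨?_, ?_, by ring⟩ <;> field_simp <;> ring

theorem lprod_L3_self (a : ℂ) : lprod (L3 a) (L3 a) = 0 := by
  simp only [lprod, L3, Matrix.cons_val_zero, Matrix.cons_val_one, Matrix.cons_val,
    ← mul_conj']
  ring_nf; simp only [I_sq]; ring

theorem lprod_L3_W (a b : ℂ) : lprod (L3 a) (W a b) = 0 := by
  simp only [lprod, L3, W, Matrix.cons_val_zero, Matrix.cons_val_one, Matrix.cons_val,
    ← mul_conj']
  ring_nf; simp only [I_sq]; ring

theorem L0_eq_exp_mul (θ : ℝ) (a : ℂ) :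
    L0 θ a = ![1 + (‖exp (θ * I) * a‖ : ℂ) ^ 2,
      exp (θ * I) * a + conj (exp (θ * I) * a),
      -I * (exp (θ * I) * a - conj (exp (θ * I) * a)),
      1 - (‖exp (θ * I) * a‖ : ℂ) ^ 2] := by
  have hconj : conj (exp (θ * I)) = exp (-θ * I) := by
    rw [← exp_conj, map_mul, conj_ofReal, conj_I, mul_neg, neg_mul]
  simp only [L0, norm_mul, norm_exp_ofReal_mul_I, one_mul, map_mul, hconj, mul_comm a,
    mul_comm (conj a)]

theorem lprod_L0_self (θ : ℝ) (a : ℂ) : lprod (L0 θ a) (L0 θ a) = 0 := by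
  rw [L0_eq_exp_mul]
  generalize exp (θ * I) * a = b
  simp only [lprod, Matrix.cons_val_zero, Matrix.cons_val_one, Matrix.cons_val,
    ← mul_conj']
  ring_nf; simp only [I_sq]; ring

theorem lprod_L0_W (θ : ℝ) (a c : ℂ) : lprod (L0 θ a) (W c (exp (θ * I) * a)) = 0 := by
  rw [L0_eq_exp_mul]
  generalize exp (θ * I) * a = b
  simp only [lprod, W, Matrix.cons_val_zero, Matrix.cons_val_one, Matrix.cons_val,
    ← mul_conj']
  ring_nf; simp only [I_sq]; ring

theorem lprod_L3_L0 (θ : ℝ) (a : ℂ) :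
    lprod (L3 a) (L0 θ a) = -2 * ((1 - 2 * ‖a‖ ^ 2 * Real.cos θ + ‖a‖ ^ 4 : ℝ) : ℂ) := by
  push_cast
  rw [cos, show (‖a‖ : ℂ) ^ 4 = ((‖a‖ : ℂ) ^ 2) ^ 2 by ring]
  simp only [lprod, L3, L0, Matrix.cons_val_zero, Matrix.cons_val_one, Matrix.cons_val,
    ← mul_conj']
  ring_nf; simp only [I_sq]; ring

theorem one_sub_two_mul_mul_cos_add_sq_nonneg (r θ : ℝ) :
    0 ≤ 1 - 2 * r * Real.cos θ + r ^ 2 := by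
  nlinarith [sq_nonneg (r - Real.cos θ), Real.sin_sq_add_cos_sq θ, sq_nonneg (Real.sin θ)]

theorem stmt_7 (a : ℂ) (θ : ℝ)
    (h : 1 - 2 * ‖a‖ ^ 2 * Real.cos θ + ‖a‖ ^ 4 ≠ 0)
    (D : ℝ) (hD : D = 4 * (1 - 2 * ‖a‖ ^ 2 * Real.cos θ + ‖a‖ ^ 4))
    (τ ν : Fin 4 → ℂ)
    (hτ : τ = ((Real.sqrt D : ℂ))⁻¹ • (L3 a + L0 θ a))
    (hν : ν = ((Real.sqrt D : ℂ))⁻¹ • (L3 a - L0 θ a)) :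
    lprod τ τ = -1 ∧ lprod ν ν = 1 ∧ lprod τ ν = 0 ∧
    τ 3 = 0 ∧ ν 0 = 0 ∧
    lprod τ (W a (Complex.exp (θ * I) * a)) = 0 ∧
    lprod ν (W a (Complex.exp (θ * I) * a)) = 0 := by
  have hD_pos : 0 < D := by
    have hquad_nonneg : 0 ≤ 1 - 2 * ‖a‖ ^ 2 * Real.cos θ + ‖a‖ ^ 4 := by
      linarith [one_sub_two_mul_mul_cos_add_sq_nonneg (‖a‖ ^ 2) θ]
    rw [hD]; exact mul_pos four_pos (hquad_nonneg.lt_of_ne' h)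
  have hs : (Real.sqrt D : ℂ) ≠ 0 := ofReal_ne_zero.2 (Real.sqrt_pos.2 hD_pos).ne'
  have hs_sq : (Real.sqrt D : ℂ) ^ 2 = D := by norm_cast; exact Real.sq_sqrt hD_pos.le
  have hL3_L0 : lprod (L3 a) (L0 θ a) = -(Real.sqrt D : ℂ) ^ 2 / 2 := by
    rw [lprod_L3_L0, hs_sq, hD]; push_cast; ring
  obtain ⟨hττ, hνν, hτν⟩ :=
    lprod_frame_of_null_pair hs (lprod_L3_self a) (lprod_L0_self θ a) hL3_L0
  subst hτ hν
  refine ⟨hττ, hνν, hτν, ?_, ?_, ?_, ?_⟩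
  · simp [L3, L0]
  · simp [L3, L0]
  all_goals simp only [lprod_smul_left, lprod_add_left, lprod_sub_left, lprod_L3_W,
    lprod_L0_W, add_zero, sub_zero, mul_zero]
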